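/- arXiv:2006.11170 — 4 statements merged into one kernel-verified Lean document; each statement's English description precedes it below -/
import Mathlib

section
/- Let Θ be a nonempty set indexing probability measures (P_θ)_{θ∈Θ} on a measurable space 𝒳, let d : Θ × Θ → [0,∞), and let f : ℕ → (0,∞) be nonincreasing with f(2n)/f(n) ≥ C₀ for all n ∈ ℕ, for some constant C₀ > 0. Suppose there is an estimator θ̂ = (θ̂_n)_{n∈ℕ} (each θ̂_n : 𝒳ⁿ → Θ such that d(θ, θ̂_n(X^n)) is measurable) and a constant C′ > 0 such that for every n ∈ ℕ and every θ ∈ Θ, E_{X^n ∼ P_θ^{⊗n}}[d(θ, θ̂_n(X^n))] ≤ C′·f(n). Define the modified estimator θ̂′_n(x_1,…,x_n) = θ̂_{2^{⌊log₂ n⌋}}(x_1,…,x_{2^{⌊log₂ n⌋}}). Then for every α > 0 there exists a constant C″ > 0 such that for every θ ∈ Θ, E_{X^∞ ∼ P_θ^{⊗ℕ}}[ sup_{n∈ℕ} d(θ, θ̂′_n(X^n)) / ( (⌊log₂ n⌋ + 1)^{1+α} · f(n) ) ] ≤ C″. In particular, the strongly adversarial time-robust minimax rate is bounded by a constant times f(n)·log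 n for n ≥ 2. -/
open MeasureTheory ProbabilityTheory

/-!
On the dyadic epoch `2^k ≤ n < 2^(k+1)` the modified estimator is the size-`2^k` estimator, and
monotonicity with the doubling condition give `C₀ f(2^k) ≤ f(n)`. So the normalized loss at
time `n` is at most `Y_k = d(θ, θ̂_{2^k}) / ((k+1)^(1+α) C₀ f(2^k))`, the supremum is at most
`∑ₖ Y_k`, and `E[Y_k] ≤ (C'/C₀) (k+1)^-(1+α)` is summable because `α > 0`.
-/

lemma ProbabilityTheory.iIndepFun.map_fin_prefix_eq_pi {Ω 𝒳 : Type*}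
    [MeasurableSpace Ω] [MeasurableSpace 𝒳]
    {Q : Measure Ω} {μ : Measure 𝒳} {X : ℕ → Ω → 𝒳} (hX : ∀ i, Measurable (X i))
    (hind : iIndepFun X Q) (hmap : ∀ i, Q.map (X i) = μ) (n : ℕ) :
    Q.map (fun ω (i : Fin n) => X i ω) = Measure.pi fun _ => μ := by
  rw [iIndepFun.map_fun_eq_pi_map (fun i : Fin n => (hX i).aemeasurable)
    (hind.precomp Fin.val_injective)]
  simp only [hmap]

lemma ProbabilityTheory.iIndepFun.lintegral_comp_fin_prefix {Ω 𝒳 : Type*}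
    [MeasurableSpace Ω] [MeasurableSpace 𝒳]
    {Q : Measure Ω} {μ : Measure 𝒳} {X : ℕ → Ω → 𝒳} (hX : ∀ i, Measurable (X i))
    (hind : iIndepFun X Q) (hmap : ∀ i, Q.map (X i) = μ) {n : ℕ}
    {L : (Fin n → 𝒳) → ENNReal} (hL : Measurable L) :
    ∫⁻ ω, L (fun i => X i ω) ∂Q = ∫⁻ x, L x ∂Measure.pi fun _ => μ := by
  rw [← hind.map_fin_prefix_eq_pi hX hmap n,
    lintegral_map hL (measurable_pi_lambda _ fun i => hX i)]

lemma lintegral_iSup_comp_le_tsum {Ω ι : Type*} [MeasurableSpace Ω] {Q : Measure Ω}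
    {Y : ℕ → Ω → ENNReal} (hY : ∀ k, AEMeasurable (Y k) Q) (φ : ι → ℕ) :
    ∫⁻ ω, ⨆ n, Y (φ n) ω ∂Q ≤ ∑' k, ∫⁻ ω, Y k ω ∂Q :=
  (lintegral_mono fun _ => iSup_le fun n => ENNReal.le_tsum (φ n)).trans
    (lintegral_tsum hY).le

lemma lintegral_ofReal_div_le {Ω : Type*} [MeasurableSpace Ω] {Q : Measure Ω} {g : Ω → ℝ}
    (hg : Measurable g) {r c : ℝ} (hc : 0 < c)
    (hgr : ∫⁻ ω, ENNReal.ofReal (g ω) ∂Q ≤ ENNReal.ofReal r) :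
    ∫⁻ ω, ENNReal.ofReal (g ω / c) ∂Q ≤ ENNReal.ofReal (r / c) := by
  simp_rw [ENNReal.ofReal_div_of_pos hc, div_eq_mul_inv]
  rw [lintegral_mul_const _ hg.ennreal_ofReal]
  gcongr

lemma mul_apply_two_pow_log_le {f : ℕ → ℝ} (hf : Antitone f) {C₀ : ℝ}
    (hfC₀ : ∀ n, C₀ * f n ≤ f (2 * n)) (n : ℕ) :
    C₀ * f (2 ^ Nat.log 2 n) ≤ f n :=
  calc C₀ * f (2 ^ Nat.log 2 n) ≤ f (2 ^ (Nat.log 2 n + 1)) := pow_succ' 2 _ ▸ hfC₀ _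
    _ ≤ f n := hf (Nat.lt_pow_succ_log_self one_lt_two n).le

lemma summable_one_div_nat_add_one_rpow {p : ℝ} (hp : 1 < p) :
    Summable fun k : ℕ => 1 / ((k : ℝ) + 1) ^ p := by
  have := (summable_nat_add_iff 1).mpr (Real.summable_one_div_nat_rpow.mpr hp)
  simpa using this

theorem time_robust_rate_log_factor_upper_bound_general
    (𝒳 Θ : Type) [m𝒳 : MeasurableSpace 𝒳]
    (P : Θ → Measure 𝒳)
    (d : Θ → Θ → ℝ) (hd : ∀ θ θ', 0 ≤ d θ θ')
    (f : ℕ → ℝ) (hfpos : ∀ n, 0 < f n) (hfanti : Antitone f)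
    (C₀ : ℝ) (hC₀ : 0 < C₀) (hfC₀ : ∀ n, C₀ * f n ≤ f (2 * n))
    (est : (n : ℕ) → (Fin n → 𝒳) → Θ)
    (hestmeas : ∀ θ n, Measurable fun x : Fin n → 𝒳 => d θ (est n x))
    (C' : ℝ) (hC' : 0 < C')
    (hrisk : ∀ (θ : Θ) (n : ℕ),
      ∫⁻ x, ENNReal.ofReal (d θ (est (n + 1) x)) ∂(Measure.pi fun _ : Fin (n + 1) => P θ)
        ≤ ENNReal.ofReal (C' * f (n + 1)))
    (α : ℝ) (hα : 0 < α) :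
    ∃ C'' : ℝ, 0 < C'' ∧
      ∀ (θ : Θ) (Ω : Type) (_ : MeasurableSpace Ω) (Q : Measure Ω),
        IsProbabilityMeasure Q →
        ∀ X : ℕ → Ω → 𝒳, (∀ i, Measurable (X i)) →
          iIndepFun X Q →
          (∀ i, Measure.map (X i) Q = P θ) →
          ∫⁻ ω, ⨆ n : ℕ,
              ENNReal.ofReal
                (d θ (est (2 ^ Nat.log 2 (n + 1)) fun i => X i.val ω)
                  / (((Nat.log 2 (n + 1) : ℝ) + 1) ^ ((1 : ℝ) + α) * f (n + 1))) ∂Q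
            ≤ ENNReal.ofReal C'' := by
  have hsum := summable_one_div_nat_add_one_rpow (p := 1 + α) (by linarith)
  refine ⟨C' / C₀ * ∑' k : ℕ, 1 / ((k : ℝ) + 1) ^ (1 + α),
    mul_pos (by positivity) (hsum.tsum_pos (fun k => by positivity) 0 (by positivity)), ?_⟩
  intro θ Ω _ Q _ X hX hind hmap
  have hloss (k : ℕ) : Measurable fun ω => d θ (est (2 ^ k) fun i => X i.val ω) :=
    (hestmeas θ _).comp (measurable_pi_lambda _ fun i => hX i.val)
  set Y : ℕ → Ω → ENNReal := fun k ω => ENNReal.ofReal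
    (d θ (est (2 ^ k) fun i => X i.val ω) / (((k : ℝ) + 1) ^ (1 + α) * (C₀ * f (2 ^ k))))
  have hYint (k : ℕ) :
      ∫⁻ ω, Y k ω ∂Q ≤ ENNReal.ofReal (C' / C₀ * (1 / ((k : ℝ) + 1) ^ (1 + α))) := by
    have hrisk_pow : ∫⁻ ω, ENNReal.ofReal (d θ (est (2 ^ k) fun i => X i.val ω)) ∂Q
        ≤ ENNReal.ofReal (C' * f (2 ^ k)) := by
      rw [hind.lintegral_comp_fin_prefix hX hmap (hestmeas θ _).ennreal_ofReal]
      have := hrisk θ (2 ^ k - 1)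
      rwa [Nat.sub_add_cancel Nat.one_le_two_pow] at this
    have := hfpos (2 ^ k)
    refine (lintegral_ofReal_div_le (hloss k) (by positivity) hrisk_pow).trans_eq ?_
    congr 1
    field_simp
  calc _ ≤ ∫⁻ ω, ⨆ n : ℕ, Y (Nat.log 2 (n + 1)) ω ∂Q := by
        refine lintegral_mono fun ω => iSup_mono fun n => ENNReal.ofReal_le_ofReal ?_
        have := mul_apply_two_pow_log_le hfanti hfC₀ (n + 1)
        have := hfpos (2 ^ Nat.log 2 (n + 1))
        gcongr
        exact hd _ _
    _ ≤ ∑' k, ∫⁻ ω, Y k ω ∂Q :=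
        lintegral_iSup_comp_le_tsum (fun k => ((hloss k).div_const _).ennreal_ofReal.aemeasurable) _
    _ ≤ ∑' k : ℕ, ENNReal.ofReal (C' / C₀ * (1 / ((k : ℝ) + 1) ^ (1 + α))) :=
        ENNReal.tsum_le_tsum hYint
    _ = _ := by
      rw [← ENNReal.ofReal_tsum_of_nonneg (fun k => by positivity) (hsum.mul_left _), tsum_mul_left]

/-- if an estimator `est` achieves the rate `f` (nonincreasing, with
`f(2n)/f(n) ≥ C₀`) for a loss `d` at every fixed sample size, then the modified estimator
`x ↦ est (2 ^ ⌊log₂ n⌋) x` achieves, up to any factor `(⌊log₂ n⌋ + 1)^{1+α}`, the rate `f`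
uniformly in time: the expectation of the supremum over all sample sizes of the normalized
loss is bounded by a constant `C''`. -/
theorem time_robust_rate_log_factor_upper_bound
    (𝒳 Θ : Type) [m𝒳 : MeasurableSpace 𝒳] [Nonempty Θ]
    (P : Θ → Measure 𝒳) (hP : ∀ θ, IsProbabilityMeasure (P θ))
    (d : Θ → Θ → ℝ) (hd : ∀ θ θ', 0 ≤ d θ θ')
    (f : ℕ → ℝ) (hfpos : ∀ n, 0 < f n) (hfanti : Antitone f)
    (C₀ : ℝ) (hC₀ : 0 < C₀) (hfC₀ : ∀ n, C₀ * f n ≤ f (2 * n))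
    (est : (n : ℕ) → (Fin n → 𝒳) → Θ)
    (hestmeas : ∀ θ n, Measurable fun x : Fin n → 𝒳 => d θ (est n x))
    (C' : ℝ) (hC' : 0 < C')
    (hrisk : ∀ (θ : Θ) (n : ℕ),
      ∫⁻ x, ENNReal.ofReal (d θ (est (n + 1) x)) ∂(Measure.pi fun _ : Fin (n + 1) => P θ)
        ≤ ENNReal.ofReal (C' * f (n + 1)))
    (α : ℝ) (hα : 0 < α) :
    ∃ C'' : ℝ, 0 < C'' ∧
      ∀ (θ : Θ) (Ω : Type) (_ : MeasurableSpace Ω) (Q : Measure Ω),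
        IsProbabilityMeasure Q →
        ∀ X : ℕ → Ω → 𝒳, (∀ i, Measurable (X i)) →
          iIndepFun X Q →
          (∀ i, Measure.map (X i) Q = P θ) →
          ∫⁻ ω, ⨆ n : ℕ,
              ENNReal.ofReal
                (d θ (est (2 ^ Nat.log 2 (n + 1)) fun i => X i.val ω)
                  / (((Nat.log 2 (n + 1) : ℝ) + 1) ^ ((1 : ℝ) + α) * f (n + 1))) ∂Q
            ≤ ENNReal.ofReal C'' :=
  time_robust_rate_log_factor_upper_bound_general 𝒳 Θ (m𝒳 := m𝒳) P d hd f hfpos hfanti C₀ hC₀ hfC₀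
    est hestmeas C' hC' hrisk α hα
end

section
/- Let (U_n)_{n∈ℕ} be a nonnegative supermartingale with respect to a filtration (𝓕_n)_{n∈ℕ} on a probability space (Ω, 𝓐, P), with E[U_1] ≤ 1. Then E[ sup_{n∈ℕ} √(U_n) / 2 ] ≤ 1. -/
/-!
By Ville's inequality, `c · P(∃ n, c ≤ U n) ≤ E[U 0] ≤ 1` for every `c ≥ 0`, so the event
`sup_n √(U n) / 2 > t` has probability at most `min 1 (1 / (4 t²))`. Integrating this tail bound
(layer cake) gives `1/2 + ∫_{1/2}^∞ dt / (4 t²) = 1`.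
-/

open MeasureTheory ProbabilityTheory Filter Set
open scoped NNReal ENNReal

theorem volume_ofReal_lt_inter_Ioi (x : ℝ≥0∞) :
    volume ({t | ENNReal.ofReal t < x} ∩ Ioi (0 : ℝ)) = x := by
  rcases eq_or_ne x ∞ with rfl | hx
  · simp
  · have : {t | ENNReal.ofReal t < x} ∩ Ioi (0 : ℝ) = Ioo 0 x.toReal := by
      ext t
      simp +contextual [ENNReal.ofReal_lt_iff_lt_toReal, le_of_lt, hx, and_comm]
    rw [this, Real.volume_Ioo, sub_zero, ENNReal.ofReal_toReal hx]

/-- Layer cake formula for `ℝ≥0∞`-valued functions: Tonelli on `{(a, t) | ofReal t < f a}`. -/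
theorem lintegral_eq_lintegral_meas_ofReal_lt {α : Type*} [MeasurableSpace α] (μ : Measure α)
    [SFinite μ] {f : α → ℝ≥0∞} (hf : Measurable f) :
    ∫⁻ a, f a ∂μ = ∫⁻ t in Ioi 0, μ {a | ENNReal.ofReal t < f a} := by
  have hS : MeasurableSet {p : α × ℝ | ENNReal.ofReal p.2 < f p.1} :=
    measurableSet_lt (ENNReal.measurable_ofReal.comp measurable_snd) (hf.comp measurable_fst)
  calc ∫⁻ a, f a ∂μ
      = ∫⁻ a, volume.restrict (Ioi 0) {t : ℝ | ENNReal.ofReal t < f a} ∂μ := by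
        simp_rw [Measure.restrict_apply' measurableSet_Ioi, volume_ofReal_lt_inter_Ioi]
    _ = ∫⁻ t in Ioi 0, μ {a | ENNReal.ofReal t < f a} :=
        (Measure.prod_apply hS).symm.trans (Measure.prod_apply_symm hS)

theorem lintegral_Ioi_inv_four_mul_sq :
    ∫⁻ t in Ioi (1 / 2 : ℝ), (ENNReal.ofReal (4 * t ^ 2))⁻¹ = 2⁻¹ := by
  have hpow : EqOn (fun t : ℝ => (4 * t ^ 2)⁻¹) (fun t => 4⁻¹ * t ^ (-2 : ℝ)) (Ioi (1 / 2)) := by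
    intro t (ht : 1 / 2 < t)
    show (4 * t ^ 2)⁻¹ = 4⁻¹ * t ^ (-2 : ℝ)
    rw [Real.rpow_neg (by linarith), Real.rpow_two, mul_inv]
  have hint : IntegrableOn (fun t : ℝ => (4 * t ^ 2)⁻¹) (Ioi (1 / 2)) :=
    IntegrableOn.congr_fun ((integrableOn_Ioi_rpow_of_lt (by norm_num : (-2 : ℝ) < -1)
      (by norm_num : (0 : ℝ) < 1 / 2)).const_mul _) hpow.symm measurableSet_Ioi
  calc ∫⁻ t in Ioi (1 / 2 : ℝ), (ENNReal.ofReal (4 * t ^ 2))⁻¹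
      = ∫⁻ t in Ioi (1 / 2 : ℝ), ENNReal.ofReal ((4 * t ^ 2)⁻¹) := by
        refine setLIntegral_congr_fun measurableSet_Ioi fun t (ht : 1 / 2 < t) => ?_
        rw [ENNReal.ofReal_inv_of_pos (by positivity)]
    _ = ENNReal.ofReal (∫ t in Ioi (1 / 2 : ℝ), (4 * t ^ 2)⁻¹) :=
        (ofReal_integral_eq_lintegral_ofReal hint (ae_of_all _ fun t => by positivity)).symm
    _ = 2⁻¹ := by
        rw [setIntegral_congr_fun measurableSet_Ioi hpow, integral_const_mul,
          integral_Ioi_rpow_of_lt (by norm_num) (by norm_num), ← ENNReal.ofReal_ofNat 2,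
          ← ENNReal.ofReal_inv_of_pos two_pos]
        norm_num

theorem lintegral_Ioi_min_one_inv_four_mul_sq_le :
    ∫⁻ t in Ioi (0 : ℝ), min 1 (ENNReal.ofReal (4 * t ^ 2))⁻¹ ≤ 1 := by
  calc ∫⁻ t in Ioi (0 : ℝ), min 1 (ENNReal.ofReal (4 * t ^ 2))⁻¹
      ≤ (∫⁻ t in Ioc (0 : ℝ) (1 / 2), min 1 (ENNReal.ofReal (4 * t ^ 2))⁻¹)
        + ∫⁻ t in Ioi (1 / 2 : ℝ), min 1 (ENNReal.ofReal (4 * t ^ 2))⁻¹ := by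
        rw [← Ioc_union_Ioi_eq_Ioi (by norm_num : (0 : ℝ) ≤ 1 / 2)]
        exact lintegral_union_le _ _ _
    _ ≤ (∫⁻ _ in Ioc (0 : ℝ) (1 / 2), 1)
        + ∫⁻ t in Ioi (1 / 2 : ℝ), (ENNReal.ofReal (4 * t ^ 2))⁻¹ := by
        gcongr with t t
        · exact min_le_left _ _
        · exact min_le_right _ _
    _ = 1 := by
        rw [setLIntegral_one, Real.volume_Ioc, lintegral_Ioi_inv_four_mul_sq, sub_zero, one_div,
          ENNReal.ofReal_inv_of_pos two_pos, ENNReal.ofReal_ofNat, ENNReal.inv_two_add_inv_two]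

namespace MeasureTheory.Supermartingale

variable {Ω : Type*} {m0 : MeasurableSpace Ω} {μ : Measure Ω} {ℱ : Filtration ℕ m0}
  {U : ℕ → Ω → ℝ}

theorem integral_stoppedValue_le_integral_zero [SigmaFiniteFiltration μ ℱ]
    (hU : Supermartingale U ℱ μ) {τ : Ω → ℕ∞} (hτ : IsStoppingTime ℱ τ) {N : ℕ}
    (hbdd : ∀ ω, τ ω ≤ N) :
    ∫ ω, stoppedValue U τ ω ∂μ ≤ ∫ ω, U 0 ω ∂μ := by
  have h := hU.neg.expected_stoppedValue_mono (isStoppingTime_const ℱ 0) hτ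
    (fun ω => bot_le) hbdd
  simpa [stoppedValue, integral_neg] using h

theorem ville_ineq_of_le [IsFiniteMeasure μ] (hU : Supermartingale U ℱ μ)
    (hpos : ∀ n, 0 ≤ᵐ[μ] U n) (ε : ℝ≥0) (N : ℕ) :
    ε * μ {ω | ∃ k ≤ N, (ε : ℝ) ≤ U k ω} ≤ ENNReal.ofReal (∫ ω, U 0 ω ∂μ) := by
  set τ : Ω → ℕ∞ := fun ω => (hittingBtwn U {y | (ε : ℝ) ≤ y} 0 N ω : ℕ)
  have hτ : IsStoppingTime ℱ τ :=
    hU.stronglyAdapted.adapted.isStoppingTime_hittingBtwn measurableSet_Ici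
  have hτ_le : ∀ ω, τ ω ≤ N := fun ω => ENat.natCast_le_natCast.2 (hittingBtwn_le ω)
  have hint : Integrable (stoppedValue U τ) μ := integrable_stoppedValue ℕ hτ hU.integrable hτ_le
  have hsub : {ω | ∃ k ≤ N, (ε : ℝ) ≤ U k ω} ⊆
      {ω | (ε : ℝ≥0∞) ≤ ENNReal.ofReal (stoppedValue U τ ω)} := by
    rintro ω ⟨k, hk, hεk⟩
    have : (ε : ℝ) ≤ stoppedValue U τ ω :=
      stoppedValue_hittingBtwn_mem ⟨k, ⟨Nat.zero_le _, hk⟩, hεk⟩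
    rw [mem_ofPred_eq, ← ENNReal.ofReal_coe_nnreal]
    exact ENNReal.ofReal_le_ofReal this
  calc ε * μ {ω | ∃ k ≤ N, (ε : ℝ) ≤ U k ω}
      ≤ ε * μ {ω | (ε : ℝ≥0∞) ≤ ENNReal.ofReal (stoppedValue U τ ω)} := by gcongr
    _ ≤ ∫⁻ ω, ENNReal.ofReal (stoppedValue U τ ω) ∂μ :=
        mul_meas_ge_le_lintegral₀ hint.aemeasurable.ennreal_ofReal _
    _ = ENNReal.ofReal (∫ ω, stoppedValue U τ ω ∂μ) := by
        refine (ofReal_integral_eq_lintegral_ofReal hint ?_).symm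
        filter_upwards [ae_all_iff.2 hpos] with ω hω using hω _
    _ ≤ ENNReal.ofReal (∫ ω, U 0 ω ∂μ) :=
        ENNReal.ofReal_le_ofReal (hU.integral_stoppedValue_le_integral_zero hτ hτ_le)

theorem ville_ineq [IsFiniteMeasure μ] (hU : Supermartingale U ℱ μ)
    (hpos : ∀ n, 0 ≤ᵐ[μ] U n) (ε : ℝ≥0) :
    ε * μ {ω | ∃ n, (ε : ℝ) ≤ U n ω} ≤ ENNReal.ofReal (∫ ω, U 0 ω ∂μ) := by
  have hunion : {ω | ∃ n, (ε : ℝ) ≤ U n ω} = ⋃ N, {ω | ∃ k ≤ N, (ε : ℝ) ≤ U k ω} := by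
    ext ω
    simp only [mem_ofPred_eq, mem_iUnion]
    exact ⟨fun ⟨n, hn⟩ => ⟨n, n, le_rfl, hn⟩, fun ⟨_, k, _, hk⟩ => ⟨k, hk⟩⟩
  have hmono : Monotone fun N => {ω | ∃ k ≤ N, (ε : ℝ) ≤ U k ω} :=
    fun M N hMN ω ⟨k, hk, hεk⟩ => ⟨k, hk.trans hMN, hεk⟩
  rw [hunion, hmono.measure_iUnion, ENNReal.mul_iSup]
  exact iSup_le (hU.ville_ineq_of_le hpos ε)

theorem mul_measure_ofReal_lt_iSup_sqrt_div_two_le [IsFiniteMeasure μ]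
    (hU : Supermartingale U ℱ μ) (hpos : ∀ n, 0 ≤ᵐ[μ] U n) {t : ℝ} (ht : 0 < t) :
    ENNReal.ofReal (4 * t ^ 2) * μ {ω | ENNReal.ofReal t < ⨆ n, ENNReal.ofReal (√(U n ω) / 2)}
      ≤ ENNReal.ofReal (∫ ω, U 0 ω ∂μ) := by
  have hsub : {ω | ENNReal.ofReal t < ⨆ n, ENNReal.ofReal (√(U n ω) / 2)} ⊆
      {ω | ∃ n, ((4 * t ^ 2).toNNReal : ℝ) ≤ U n ω} := by
    intro ω (hω : ENNReal.ofReal t < _)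
    obtain ⟨n, hn⟩ := lt_iSup_iff.1 hω
    have h2t : 2 * t < √(U n ω) := by linarith [(ENNReal.ofReal_lt_ofReal_iff'.1 hn).1]
    refine ⟨n, ?_⟩
    rw [Real.coe_toNNReal _ (by positivity)]
    nlinarith [(Real.lt_sqrt (by positivity)).1 h2t]
  calc ENNReal.ofReal (4 * t ^ 2) * μ {ω | ENNReal.ofReal t < ⨆ n, ENNReal.ofReal (√(U n ω) / 2)}
      ≤ (4 * t ^ 2).toNNReal * μ {ω | ∃ n, ((4 * t ^ 2).toNNReal : ℝ) ≤ U n ω} :=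
        mul_le_mul_right (measure_mono hsub) _
    _ ≤ ENNReal.ofReal (∫ ω, U 0 ω ∂μ) := hU.ville_ineq hpos _

end MeasureTheory.Supermartingale

/-- if `(U n)` is a nonnegative supermartingale with `E[U 0] ≤ 1`
(a test supermartingale), then `E[sup_n √(U n) / 2] ≤ 1`. -/
theorem expectation_sup_sqrt_test_supermartingale
    (Ω : Type) [mΩ : MeasurableSpace Ω] (P : Measure Ω) [IsProbabilityMeasure P]
    (ℱ : Filtration ℕ mΩ) (U : ℕ → Ω → ℝ)
    (hU : Supermartingale U ℱ P) (hpos : ∀ n, 0 ≤ᵐ[P] U n)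
    (hstart : ∫ ω, U 0 ω ∂P ≤ 1) :
    ∫⁻ ω, ⨆ n : ℕ, ENNReal.ofReal (Real.sqrt (U n ω) / 2) ∂P ≤ 1 := by
  have hmeas : Measurable fun ω => ⨆ n : ℕ, ENNReal.ofReal (Real.sqrt (U n ω) / 2) :=
    .iSup fun n =>
      (((hU.stronglyMeasurable n).measurable.le (ℱ.le n)).sqrt.div_const 2).ennreal_ofReal
  have htail : ∀ t ∈ Ioi (0 : ℝ), P {ω | ENNReal.ofReal t < ⨆ n, ENNReal.ofReal (√(U n ω) / 2)}
      ≤ min 1 (ENNReal.ofReal (4 * t ^ 2))⁻¹ := fun t ht =>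
    le_min prob_le_one <| ENNReal.le_inv_iff_mul_le.2 <| by
      rw [mul_comm]
      exact (hU.mul_measure_ofReal_lt_iSup_sqrt_div_two_le hpos ht).trans
        (ENNReal.ofReal_le_one.2 hstart)
  rw [lintegral_eq_lintegral_meas_ofReal_lt P hmeas]
  exact (setLIntegral_mono' measurableSet_Ioi htail).trans
    lintegral_Ioi_min_one_inv_four_mul_sq_le
end

section
/- Let V be a random variable on a probability space (Ω, 𝓐, P) with V > 0 almost surely and P(V ≤ α) ≤ α for every α ∈ (0, 1]. Then E[ 1 / (2·√V) ] ≤ 1. -/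
open MeasureTheory Set ENNReal

/-!
By the layer-cake formula, `E[f(V)] = ∫₀^∞ P(f(V) > t) dt` for `f u = 1 / (2√u)`. Since `f` is
nonincreasing, each superlevel set `{f > t}` is (up to the irrelevant half-line `u ≤ 0`) a lower
set, and a p-value variable puts at most as much mass on a lower set as the uniform law on
`(0, 1]` does. Comparing the two layer-cake integrals gives `E[f(V)] ≤ ∫₀¹ f = √1 - √0 = 1`.
-/

section PValue

variable {Ω : Type*} [MeasurableSpace Ω] {P : Measure Ω} [IsProbabilityMeasure P] {V : Ω → ℝ}

lemma measure_setOf_le_le_volume_Iio_inter_Ioc (hVpos : ∀ᵐ ω ∂P, 0 < V ω)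
    (hp : ∀ α : ℝ, 0 < α → α ≤ 1 → P {ω | V ω ≤ α} ≤ ENNReal.ofReal α) (a : ℝ) :
    P {ω | V ω ≤ a} ≤ volume (Iio a ∩ Ioc 0 1) := by
  rcases le_or_gt a 0 with ha0 | ha0
  · have hnull : P {ω | V ω ≤ a} = 0 := by
      rw [measure_eq_zero_iff_ae_notMem]
      filter_upwards [hVpos] with ω hω using fun h : V ω ≤ a => by linarith
    simp [hnull]
  rcases le_or_gt a 1 with ha1 | ha1
  · calc P {ω | V ω ≤ a} ≤ ENNReal.ofReal a := hp a ha0 ha1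
      _ = volume (Ioo 0 a) := by rw [Real.volume_Ioo, sub_zero]
      _ ≤ volume (Iio a ∩ Ioc 0 1) := measure_mono fun x hx => ⟨hx.2, hx.1, hx.2.le.trans ha1⟩
  · calc P {ω | V ω ≤ a} ≤ 1 := prob_le_one
      _ = volume (Ioc (0 : ℝ) 1) := by rw [Real.volume_Ioc, sub_zero, ofReal_one]
      _ ≤ volume (Iio a ∩ Ioc 0 1) := measure_mono fun x hx => ⟨hx.2.trans_lt ha1, hx⟩

lemma measure_preimage_le_volume_inter_Ioc (hVpos : ∀ᵐ ω ∂P, 0 < V ω)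
    (hp : ∀ α : ℝ, 0 < α → α ≤ 1 → P {ω | V ω ≤ α} ≤ ENNReal.ofReal α)
    {S : Set ℝ} (hS : IsLowerSet S) :
    P (V ⁻¹' S) ≤ volume (S ∩ Ioc 0 1) := by
  by_cases hbdd : BddAbove S
  · rcases S.eq_empty_or_nonempty with rfl | hne
    · simp
    have hS_Iic : S ⊆ Iic (sSup S) := fun x hx => le_csSup hbdd hx
    have hIio_S : Iio (sSup S) ⊆ S := fun x hx => by
      obtain ⟨y, hyS, hxy⟩ := exists_lt_of_lt_csSup hne hx
      exact hS hxy.le hyS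
    calc P (V ⁻¹' S) ≤ P {ω | V ω ≤ sSup S} := measure_mono fun ω hω => hS_Iic hω
      _ ≤ volume (Iio (sSup S) ∩ Ioc 0 1) := measure_setOf_le_le_volume_Iio_inter_Ioc hVpos hp _
      _ ≤ volume (S ∩ Ioc 0 1) := measure_mono (inter_subset_inter_left _ hIio_S)
  · have hS_univ : S = univ := eq_univ_of_forall fun x => by
      obtain ⟨y, hyS, hxy⟩ := not_bddAbove_iff.mp hbdd x
      exact hS hxy.le hyS
    simp [hS_univ]

theorem lintegral_comp_le_setLIntegral_Ioc (hVmeas : Measurable V) (hVpos : ∀ᵐ ω ∂P, 0 < V ω)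
    (hp : ∀ α : ℝ, 0 < α → α ≤ 1 → P {ω | V ω ≤ α} ≤ ENNReal.ofReal α)
    {f : ℝ → ℝ} (hf_nonneg : 0 ≤ f) (hf_meas : Measurable f) (hf_anti : AntitoneOn f (Ioi 0)) :
    ∫⁻ ω, ENNReal.ofReal (f (V ω)) ∂P ≤ ∫⁻ u in Ioc 0 1, ENNReal.ofReal (f u) := by
  rw [lintegral_eq_lintegral_meas_lt P (ae_of_all _ fun ω => hf_nonneg (V ω))
      (hf_meas.comp hVmeas).aemeasurable,
    lintegral_eq_lintegral_meas_lt _ (ae_of_all _ hf_nonneg) hf_meas.aemeasurable]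
  refine lintegral_mono fun t => ?_
  -- Adding `Iic 0` makes the superlevel set a lower set without changing either side.
  have hS : IsLowerSet (Iic 0 ∪ {u | t < f u}) := by
    rintro x y hyx (hx | hx)
    · exact Or.inl (hyx.trans hx)
    · rcases le_or_gt y 0 with hy | hy
      · exact Or.inl hy
      · exact Or.inr (hx.trans_le (hf_anti hy (hy.trans_le hyx) hyx))
  calc P {ω | t < f (V ω)} ≤ P (V ⁻¹' (Iic 0 ∪ {u | t < f u})) :=
        measure_mono fun ω hω => Or.inr hω
    _ ≤ volume ((Iic 0 ∪ {u | t < f u}) ∩ Ioc 0 1) :=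
        measure_preimage_le_volume_inter_Ioc hVpos hp hS
    _ = volume.restrict (Ioc 0 1) {u | t < f u} := by
        rw [Measure.restrict_apply' measurableSet_Ioc, union_inter_distrib_right,
          Iic_inter_Ioc_of_le zero_le_one, Ioc_self, empty_union]

end PValue

lemma lintegral_one_div_two_mul_sqrt_Ioc_zero_one :
    ∫⁻ u in Ioc (0 : ℝ) 1, ENNReal.ofReal (1 / (2 * √u)) = 1 := by
  have hderiv : ∀ x ∈ Ioo (0 : ℝ) 1, HasDerivAt (√·) (1 / (2 * √x)) x :=
    fun x hx => Real.hasDerivAt_sqrt hx.1.ne'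
  have hnonneg : ∀ x : ℝ, 0 ≤ 1 / (2 * √x) := fun x => by positivity
  have hint : IntegrableOn (fun x : ℝ => 1 / (2 * √x)) (Ioc 0 1) :=
    intervalIntegral.integrableOn_deriv_of_nonneg Real.continuous_sqrt.continuousOn hderiv
      fun x _ => hnonneg x
  rw [← ofReal_integral_eq_lintegral_ofReal hint (ae_of_all _ hnonneg),
    ← intervalIntegral.integral_of_le zero_le_one,
    intervalIntegral.integral_eq_sub_of_hasDerivAt_of_le zero_le_one
      Real.continuous_sqrt.continuousOn hderiv
      ((intervalIntegrable_iff_integrableOn_Ioc_of_le zero_le_one).mpr hint)]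
  simp

/-- if `V > 0` a.s. and `P(V ≤ α) ≤ α` for every `α ∈ (0,1]` (i.e. `V` is a
p-value variable), then `E[1/(2√V)] ≤ 1` (i.e. `1/(2√V)` is an E-variable). -/
theorem e_value_from_p_value
    (Ω : Type) [MeasurableSpace Ω] (P : Measure Ω) [IsProbabilityMeasure P]
    (V : Ω → ℝ) (hVmeas : Measurable V) (hVpos : ∀ᵐ ω ∂P, 0 < V ω)
    (hp : ∀ α : ℝ, 0 < α → α ≤ 1 → P {ω | V ω ≤ α} ≤ ENNReal.ofReal α) :
    ∫⁻ ω, ENNReal.ofReal (1 / (2 * Real.sqrt (V ω))) ∂P ≤ 1 := by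
  have hanti : AntitoneOn (fun u : ℝ => 1 / (2 * √u)) (Ioi 0) := fun x hx y _ hxy => by
    have := Real.sqrt_pos.mpr hx
    dsimp only
    gcongr
  exact (lintegral_comp_le_setLIntegral_Ioc hVmeas hVpos hp (fun u => by positivity)
    (by fun_prop) hanti).trans_eq lintegral_one_div_two_mul_sqrt_Ioc_zero_one
end

section
/- Let k ∈ ℕ, σ > 0, δ > 0 and let Y_1, Y_2, … be i.i.d. random vectors in ℝ^k with mean μ = E[Y_1], satisfying: for every η ∈ ℝ^k with ‖η‖² ≤ δ, E[exp(⟨η, Y_1 − μ⟩)] ≤ exp(σ·⟨η,η⟩/2). Set S_n = Σ_{i=1}^n (Y_i − μ). Let γ be any probability measure on the closed ball B_δ(0) = {η ∈ ℝ^k : ‖η‖² ≤ δ}, and define Z_0 = 1 and Z_n = ∫_{B_δ(0)} exp(⟨η, S_n⟩ − n·σ·⟨η,η⟩/2) dγ(η) for n ≥ 1. Then (Z_n)_{n≥0} is a nonnegative supermartingale with respect to the filtration (σ(Y_1,…,Y_n))_{n≥0}, with Z_0 = 1. -/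
/-!
For each `η` in the ball, `exp(⟨η, S n⟩ - nσ⟨η,η⟩/2)` is the product of the `n` independent
nonnegative factors `exp(⟨η, Y i - μ⟩ - σ⟨η,η⟩/2)`, each of mean at most `1` by the mgf bound
(transported from `Y 0` to `Y i` by identical distribution). Multiplying by a factor that is
independent of `σ(Y 0, …, Y (n-1))` and has mean at most `1` can only decrease integrals over
events of that σ-algebra, so each such product is a nonnegative supermartingale. By Tonelli the
same set-integral inequalities survive averaging over `η ∼ γ`, which gives the supermartingale
property of `Z`; working in `ℝ≥0∞` avoids all integrability side conditions until the end.
-/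

open MeasureTheory ProbabilityTheory Filter
open scoped RealInnerProductSpace

/-- The natural filtration of the data: `natFilt Y hY n = σ(Y_0, …, Y_{n-1})`,
the σ-algebra generated by the first `n` observations. -/
noncomputable def natFilt {Ω β : Type*} [mΩ : MeasurableSpace Ω] [MeasurableSpace β]
    (Y : ℕ → Ω → β) (hY : ∀ i, Measurable (Y i)) : Filtration ℕ mΩ where
  seq n := ⨆ i ∈ Finset.range n, MeasurableSpace.comap (Y i) inferInstance
  mono' := fun _ _ hnm => biSup_mono fun _ hi =>
    Finset.mem_range.mpr (lt_of_lt_of_le (Finset.mem_range.mp hi) hnm)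
  le' _ := iSup₂_le fun i _ => (hY i).comap_le

open scoped ENNReal
open Finset Function

theorem MeasureTheory.supermartingale_toReal_of_setLIntegral_succ_le {Ω : Type*}
    {mΩ : MeasurableSpace Ω} {P : Measure Ω} [IsFiniteMeasure P] {F : Filtration ℕ mΩ}
    {Z : ℕ → Ω → ℝ≥0∞} (hZm : ∀ n, Measurable[F n] (Z n)) (hZ0 : ∫⁻ ω, Z 0 ω ∂P ≠ ∞)
    (hZ : ∀ n A, MeasurableSet[F n] A → ∫⁻ ω in A, Z (n + 1) ω ∂P ≤ ∫⁻ ω in A, Z n ω ∂P) :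
    Supermartingale (fun n ω => (Z n ω).toReal) F P := by
  have hmeas n : Measurable (Z n) := (hZm n).mono (F.le n) le_rfl
  have hfin n : ∫⁻ ω, Z n ω ∂P ≠ ∞ := by
    have hanti : Antitone fun n => ∫⁻ ω, Z n ω ∂P := antitone_nat_of_succ_le fun n => by
      simpa using hZ n Set.univ MeasurableSet.univ
    exact ne_top_of_le_ne_top hZ0 (hanti n.zero_le)
  have hset n (A : Set Ω) : ∫ ω in A, (Z n ω).toReal ∂P = (∫⁻ ω in A, Z n ω ∂P).toReal :=
    integral_toReal (hmeas n).aemeasurable.restrict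
      (ae_restrict_of_ae (ae_lt_top (hmeas n) (hfin n)))
  refine supermartingale_of_setIntegral_succ_le
    (fun n => (hZm n).ennreal_toReal.stronglyMeasurable)
    (fun n => integrable_toReal_of_lintegral_ne_top (hmeas n).aemeasurable (hfin n))
    fun n A hA => ?_
  rw [hset, hset]
  exact ENNReal.toReal_mono (ne_top_of_le_ne_top (hfin n) (setLIntegral_le_lintegral _ _))
    (hZ n A hA)

section NatFilt

variable {Ω β : Type*} [mΩ : MeasurableSpace Ω] [MeasurableSpace β] {Y : ℕ → Ω → β}
  (hY : ∀ i, Measurable (Y i))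

theorem measurable_natFilt {i n : ℕ} (hi : i < n) : Measurable[natFilt Y hY n] (Y i) :=
  Measurable.of_comap_le <| le_iSup₂ (f := fun j (_ : j ∈ range n) =>
    MeasurableSpace.comap (Y j) inferInstance) i (mem_range.2 hi)

theorem indep_natFilt_comap {P : Measure Ω} (hindep : iIndepFun Y P) (n : ℕ) :
    Indep (natFilt Y hY n) (MeasurableSpace.comap (Y n) inferInstance) P := by
  have h := indep_biSup_compl (fun i => (hY i).comap_le)
    ((iIndepFun_iff_iIndep _ _ _).mp hindep) {i | i < n}
  refine indep_of_indep_of_le_left (indep_of_indep_of_le_right h ?_) ?_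
  · exact le_iSup₂ (f := fun i (_ : i ∈ {j | j < n}ᶜ) =>
      MeasurableSpace.comap (Y i) inferInstance) n (by simp)
  · exact iSup₂_le fun i hi => le_iSup₂ (f := fun j (_ : j ∈ {j | j < n}) =>
      MeasurableSpace.comap (Y j) inferInstance) i (by simpa using hi)

theorem setLIntegral_prod_range_succ_le {P : Measure Ω} (hindep : iIndepFun Y P) {g : β → ℝ≥0∞}
    (hg : Measurable g) {n : ℕ} (hgn : ∫⁻ ω, g (Y n ω) ∂P ≤ 1) {A : Set Ω}
    (hA : MeasurableSet[natFilt Y hY n] A) :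
    ∫⁻ ω in A, ∏ i ∈ range (n + 1), g (Y i ω) ∂P ≤ ∫⁻ ω in A, ∏ i ∈ range n, g (Y i ω) ∂P := by
  have hprod : Measurable[natFilt Y hY n] fun ω => ∏ i ∈ range n, g (Y i ω) :=
    Finset.measurable_prod _ fun i hi => hg.comp (measurable_natFilt hY (mem_range.1 hi))
  have hA' : MeasurableSet A := (natFilt Y hY).le n A hA
  simp only [prod_range_succ]
  rw [← lintegral_indicator hA', ← lintegral_indicator hA']
  calc ∫⁻ ω, A.indicator (fun ω => (∏ i ∈ range n, g (Y i ω)) * g (Y n ω)) ω ∂P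
      = ∫⁻ ω, A.indicator (fun ω => ∏ i ∈ range n, g (Y i ω)) ω * g (Y n ω) ∂P := by
        simp only [Set.indicator_mul_left]
    _ = (∫⁻ ω, A.indicator (fun ω => ∏ i ∈ range n, g (Y i ω)) ω ∂P) * ∫⁻ ω, g (Y n ω) ∂P :=
        lintegral_mul_eq_lintegral_mul_lintegral_of_independent_measurableSpace
          ((natFilt Y hY).le n) (hY n).comap_le (indep_natFilt_comap hY hindep n)
          (hprod.indicator hA) (hg.comp (Measurable.of_comap_le le_rfl))
    _ ≤ ∫⁻ ω, A.indicator (fun ω => ∏ i ∈ range n, g (Y i ω)) ω ∂P :=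
        mul_le_of_le_one_right' hgn

end NatFilt

section ProductMixture

variable {Ω β E : Type*} [MeasurableSpace β] [MeasurableSpace E] {Y : ℕ → Ω → β}
  {γ : Measure E} {g : E → β → ℝ≥0∞}

noncomputable def productMixture (γ : Measure E) (g : E → β → ℝ≥0∞) (Y : ℕ → Ω → β) (n : ℕ)
    (ω : Ω) : ℝ≥0∞ :=
  ∫⁻ η, ∏ i ∈ range n, g η (Y i ω) ∂γ

theorem measurable_prod_range_uncurry (hg : Measurable (uncurry g)) {m : MeasurableSpace Ω}
    {n : ℕ} (hYm : ∀ i < n, Measurable[m] (Y i)) :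
    Measurable[m.prod inferInstance] fun p : Ω × E => ∏ i ∈ range n, g p.2 (Y i p.1) :=
  Finset.measurable_prod _ fun i hi =>
    hg.comp (measurable_snd.prodMk ((hYm i (mem_range.1 hi)).comp measurable_fst))

variable [mΩ : MeasurableSpace Ω] {P : Measure Ω} (hY : ∀ i, Measurable (Y i))

theorem measurable_productMixture [SFinite γ] (hg : Measurable (uncurry g)) (n : ℕ) :
    Measurable[natFilt Y hY n] (productMixture γ g Y n) :=
  @Measurable.lintegral_prod_right' _ _ (natFilt Y hY n) _ γ _ _
    (measurable_prod_range_uncurry hg fun _ hi => measurable_natFilt hY hi)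

theorem setLIntegral_productMixture_succ_le [SFinite P] [SFinite γ] (hindep : iIndepFun Y P)
    (hg : Measurable (uncurry g)) (hmean : ∀ᵐ η ∂γ, ∀ i, ∫⁻ ω, g η (Y i ω) ∂P ≤ 1) {n : ℕ}
    {A : Set Ω} (hA : MeasurableSet[natFilt Y hY n] A) :
    ∫⁻ ω in A, productMixture γ g Y (n + 1) ω ∂P ≤ ∫⁻ ω in A, productMixture γ g Y n ω ∂P := by
  have hjoint (j : ℕ) := measurable_prod_range_uncurry (n := j) hg fun i _ => hY i
  calc ∫⁻ ω in A, productMixture γ g Y (n + 1) ω ∂P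
      = ∫⁻ η, ∫⁻ ω in A, ∏ i ∈ range (n + 1), g η (Y i ω) ∂P ∂γ :=
        lintegral_lintegral_swap (hjoint _).aemeasurable
    _ ≤ ∫⁻ η, ∫⁻ ω in A, ∏ i ∈ range n, g η (Y i ω) ∂P ∂γ :=
        lintegral_mono_ae <| hmean.mono fun η hη =>
          setLIntegral_prod_range_succ_le hY hindep hg.of_uncurry_left (hη n) hA
    _ = ∫⁻ ω in A, productMixture γ g Y n ω ∂P :=
        (lintegral_lintegral_swap (hjoint _).aemeasurable).symm

theorem supermartingale_toReal_productMixture [IsFiniteMeasure P] [IsFiniteMeasure γ]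
    (hindep : iIndepFun Y P) (hg : Measurable (uncurry g))
    (hmean : ∀ᵐ η ∂γ, ∀ i, ∫⁻ ω, g η (Y i ω) ∂P ≤ 1) :
    Supermartingale (fun n ω => (productMixture γ g Y n ω).toReal) (natFilt Y hY) P :=
  supermartingale_toReal_of_setLIntegral_succ_le (measurable_productMixture hY hg)
    (by simp [productMixture, ENNReal.mul_eq_top])
    fun _ _ hA => setLIntegral_productMixture_succ_le hY hindep hg hmean hA

end ProductMixture

theorem lintegral_ofReal_exp_sub_le_one {Ω : Type*} {mΩ : MeasurableSpace Ω} {P : Measure Ω}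
    {f : Ω → ℝ} {c : ℝ}
    (h : ∫⁻ ω, ENNReal.ofReal (Real.exp (f ω)) ∂P ≤ ENNReal.ofReal (Real.exp c)) :
    ∫⁻ ω, ENNReal.ofReal (Real.exp (f ω - c)) ∂P ≤ 1 :=
  calc ∫⁻ ω, ENNReal.ofReal (Real.exp (f ω - c)) ∂P
      = (∫⁻ ω, ENNReal.ofReal (Real.exp (f ω)) ∂P) * ENNReal.ofReal (Real.exp (-c)) := by
        simp_rw [sub_eq_add_neg, Real.exp_add, ENNReal.ofReal_mul (Real.exp_pos _).le]
        exact lintegral_mul_const' _ _ ENNReal.ofReal_ne_top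
    _ ≤ ENNReal.ofReal (Real.exp c) * ENNReal.ofReal (Real.exp (-c)) := by gcongr
    _ = 1 := by
        rw [← ENNReal.ofReal_mul (Real.exp_pos _).le, ← Real.exp_add, add_neg_cancel,
          Real.exp_zero, ENNReal.ofReal_one]

theorem ofReal_exp_inner_sum_sub_eq_prod {F : Type*} [NormedAddCommGroup F]
    [InnerProductSpace ℝ F] (η : F) (x : ℕ → F) (c : ℝ) (n : ℕ) :
    ENNReal.ofReal (Real.exp (⟪η, ∑ i ∈ range n, x i⟫ - n * c))
      = ∏ i ∈ range n, ENNReal.ofReal (Real.exp (⟪η, x i⟫ - c)) := by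
  rw [inner_sum, ← ENNReal.ofReal_prod_of_nonneg fun _ _ => (Real.exp_pos _).le, ← Real.exp_sum,
    sum_sub_distrib, sum_const, card_range, nsmul_eq_mul]

theorem mixture_is_test_supermartingale_general
    (k : ℕ) (σ δ : ℝ)
    (Ω : Type) [mΩ : MeasurableSpace Ω] (P : Measure Ω) [IsProbabilityMeasure P]
    (Y : ℕ → Ω → EuclideanSpace ℝ (Fin k)) (hY : ∀ i, Measurable (Y i))
    (hindep : iIndepFun Y P)
    (hident : ∀ i, Measure.map (Y i) P = Measure.map (Y 0) P)
    (μ : EuclideanSpace ℝ (Fin k))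
    (hmgf : ∀ η : EuclideanSpace ℝ (Fin k), ‖η‖ ^ 2 ≤ δ →
      ∫⁻ ω, ENNReal.ofReal (Real.exp ⟪η, Y 0 ω - μ⟫) ∂P
        ≤ ENNReal.ofReal (Real.exp (σ * ⟪η, η⟫ / 2)))
    (γ : Measure (EuclideanSpace ℝ (Fin k))) [IsProbabilityMeasure γ]
    (hγ : ∀ᵐ η ∂γ, ‖η‖ ^ 2 ≤ δ)
    (S : ℕ → Ω → EuclideanSpace ℝ (Fin k))
    (hS : S = fun n ω => ∑ i ∈ Finset.range n, (Y i ω - μ))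
    (Z : ℕ → Ω → ℝ)
    (hZ : Z = fun n ω => ∫ η, Real.exp (⟪η, S n ω⟫ - n * σ * ⟪η, η⟫ / 2) ∂γ) :
    Supermartingale Z (natFilt Y hY) P ∧ (∀ n ω, 0 ≤ Z n ω) ∧ ∀ ω, Z 0 ω = 1 := by
  set g : EuclideanSpace ℝ (Fin k) → EuclideanSpace ℝ (Fin k) → ℝ≥0∞ :=
    fun η y => ENNReal.ofReal (Real.exp (⟪η, y - μ⟫ - σ * ⟪η, η⟫ / 2))
  have hg : Measurable (uncurry g) := by fun_prop
  have hmean : ∀ᵐ η ∂γ, ∀ i, ∫⁻ ω, g η (Y i ω) ∂P ≤ 1 := by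
    filter_upwards [hγ] with η hη i
    rw [← lintegral_map hg.of_uncurry_left (hY i), hident i,
      lintegral_map hg.of_uncurry_left (hY 0)]
    exact lintegral_ofReal_exp_sub_le_one (hmgf η hη)
  have hZg : Z = fun n ω => (productMixture γ g Y n ω).toReal := by
    ext n ω
    simp only [hZ, hS]
    rw [integral_eq_lintegral_of_nonneg_ae (ae_of_all _ fun η => (Real.exp_pos _).le)
      (by fun_prop : Continuous fun η : EuclideanSpace ℝ (Fin k) => Real.exp
        (⟪η, ∑ i ∈ range n, (Y i ω - μ)⟫ - n * σ * ⟪η, η⟫ / 2)).aestronglyMeasurable]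
    congr 2 with η
    rw [show (n : ℝ) * σ * ⟪η, η⟫ / 2 = n * (σ * ⟪η, η⟫ / 2) by ring,
      ofReal_exp_inner_sum_sub_eq_prod]
  refine ⟨hZg ▸ supermartingale_toReal_productMixture hY hindep hg hmean,
    fun n ω => hZg ▸ ENNReal.toReal_nonneg, fun ω => ?_⟩
  simp [hZg, productMixture]

/-- with `Y 0, Y 1, …` i.i.d. in `ℝ^k` with mean `μ` and sub-Gaussian mgf on the
ball `‖η‖² ≤ δ`, `S n = Σ_{i<n} (Y i - μ)`, and `γ` any probability measure on that ball,
the process `Z n = ∫ exp(⟨η, S n⟩ - nσ⟨η,η⟩/2) dγ(η)` is a nonnegative supermartingale with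
respect to the natural filtration of `Y`, with `Z 0 = 1` (a test supermartingale). -/
theorem mixture_is_test_supermartingale
    (k : ℕ) (σ δ : ℝ) (hσ : 0 < σ) (hδ : 0 < δ)
    (Ω : Type) [mΩ : MeasurableSpace Ω] (P : Measure Ω) [IsProbabilityMeasure P]
    (Y : ℕ → Ω → EuclideanSpace ℝ (Fin k)) (hY : ∀ i, Measurable (Y i))
    (hindep : iIndepFun Y P)
    (hident : ∀ i, Measure.map (Y i) P = Measure.map (Y 0) P)
    (μ : EuclideanSpace ℝ (Fin k)) (hint : Integrable (Y 0) P) (hμ : μ = ∫ ω, Y 0 ω ∂P)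
    (hmgf : ∀ η : EuclideanSpace ℝ (Fin k), ‖η‖ ^ 2 ≤ δ →
      ∫⁻ ω, ENNReal.ofReal (Real.exp ⟪η, Y 0 ω - μ⟫) ∂P
        ≤ ENNReal.ofReal (Real.exp (σ * ⟪η, η⟫ / 2)))
    (γ : Measure (EuclideanSpace ℝ (Fin k))) [IsProbabilityMeasure γ]
    (hγ : ∀ᵐ η ∂γ, ‖η‖ ^ 2 ≤ δ)
    (S : ℕ → Ω → EuclideanSpace ℝ (Fin k))
    (hS : S = fun n ω => ∑ i ∈ Finset.range n, (Y i ω - μ))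
    (Z : ℕ → Ω → ℝ)
    (hZ : Z = fun n ω => ∫ η, Real.exp (⟪η, S n ω⟫ - n * σ * ⟪η, η⟫ / 2) ∂γ) :
    Supermartingale Z (natFilt Y hY) P ∧ (∀ n ω, 0 ≤ Z n ω) ∧ ∀ ω, Z 0 ω = 1 :=
  mixture_is_test_supermartingale_general k σ δ Ω (mΩ := mΩ) P Y hY hindep hident μ hmgf γ hγ S hS Z
    hZ
end
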